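/- The strict cartesian product of two stable qualification domains is a stable qualification domain: given stable qualification domains D1 and D2, the structure whose carrier is {⊥} ∪ ((D1 \ {⊥1}) × (D2 \ {⊥2})), ordered componentwise with ⊥ below everything, with top (⊤1,⊤2) and componentwise attenuation (and d ∘ ⊥ = ⊥ ∘ d = ⊥), is again a stable qualification domain. -/

import Mathlib

/-- A qualification domain: a bounded lattice with an attenuation operation. -/
class QualDomain (D : Type*) extends Lattice D, BoundedOrder D where
  att : D → D → D
  att_assoc : ∀ a b c : D, att (att a b) c = att a (att b c)
  att_comm : ∀ a b : D, att a b = att b a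
  att_mono : ∀ a b c d : D, a ≤ b → c ≤ d → att a c ≤ att b d
  att_top : ∀ a : D, att a ⊤ = a
  att_bot : ∀ a : D, att a ⊥ = ⊥
  att_le : ∀ a b : D, att a b ≤ b
  att_inf : ∀ a b c : D, att a (b ⊓ c) = att a b ⊓ att a c

open QualDomain

/-- A qualification domain is stable iff attenuation of non-bottom elements is non-bottom. -/
def Stable (D : Type*) [QualDomain D] : Prop :=
  ∀ d e : D, d ≠ ⊥ → e ≠ ⊥ → att d e ≠ ⊥

/-- The non-bottom elements of a qualification domain. -/
abbrev NB (D : Type*) [QualDomain D] := {d : D // d ≠ ⊥}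

section StrictProd

variable {D1 D2 : Type*} [QualDomain D1] [QualDomain D2]

/-- The order of the strict cartesian product: the new bottom (`none`) is below
everything, and pairs of non-bottom elements are compared componentwise. -/
def sLE : Option (NB D1 × NB D2) → Option (NB D1 × NB D2) → Prop
  | none, _ => True
  | some _, none => False
  | some p, some q => p.1.1 ≤ q.1.1 ∧ p.2.1 ≤ q.2.1

open scoped Classical in
/-- The infimum of the strict cartesian product: componentwise on non-bottom
pairs whenever both componentwise infima are non-bottom, and bottom otherwise. -/
noncomputable def sInf : Option (NB D1 × NB D2) → Option (NB D1 × NB D2) → Option (NB D1 × NB D2)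
  | none, _ => none
  | some _, none => none
  | some p, some q =>
      if h : p.1.1 ⊓ q.1.1 ≠ (⊥ : D1) ∧ p.2.1 ⊓ q.2.1 ≠ (⊥ : D2)
      then some (⟨p.1.1 ⊓ q.1.1, h.1⟩, ⟨p.2.1 ⊓ q.2.1, h.2⟩)
      else none

/-- The supremum of the strict cartesian product: componentwise on non-bottom pairs. -/
def sSup : Option (NB D1 × NB D2) → Option (NB D1 × NB D2) → Option (NB D1 × NB D2)
  | none, b => b
  | a, none => a
  | some p, some q =>
      some (⟨p.1.1 ⊔ q.1.1, fun h => p.1.2 (le_bot_iff.mp (le_of_le_of_eq le_sup_left h))⟩,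
            ⟨p.2.1 ⊔ q.2.1, fun h => p.2.2 (le_bot_iff.mp (le_of_le_of_eq le_sup_left h))⟩)

/-- The attenuation of the strict cartesian product of two stable qualification
domains: componentwise on non-bottom pairs, with d ∘ ⊥ = ⊥ ∘ d = ⊥. -/
def sAtt (h1 : Stable D1) (h2 : Stable D2) :
    Option (NB D1 × NB D2) → Option (NB D1 × NB D2) → Option (NB D1 × NB D2)
  | none, _ => none
  | some _, none => none
  | some p, some q =>
      some (⟨att p.1.1 q.1.1, h1 _ _ p.1.2 q.1.2⟩, ⟨att p.2.1 q.2.1, h2 _ _ p.2.2 q.2.2⟩)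

/-!
Order, supremum and attenuation of the strict product are componentwise on non-bottom pairs,
so their laws are inherited from the factors. The one non-componentwise operation is the
infimum, which collapses to the new bottom as soon as one componentwise meet is `⊥`. For
`d ≠ ⊥` in a stable domain, `d ∘ e = ⊥ ↔ e = ⊥`; combined with `d ∘ (e ⊓ f) = d ∘ e ⊓ d ∘ f`,
attenuating by a non-bottom pair neither creates nor removes such a collapse, which gives
distributivity over the infimum.
-/

theorem Stable.att_eq_bot_iff {D : Type*} [QualDomain D] (hD : Stable D) {d e : D}
    (hd : d ≠ ⊥) : att d e = ⊥ ↔ e = ⊥ :=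
  ⟨not_imp_not.1 (hD d e hd), fun he => he ▸ att_bot d⟩

section Order

@[simp]
theorem sLE_none (a : Option (NB D1 × NB D2)) : sLE none a := trivial

@[simp]
theorem not_sLE_some_none (p : NB D1 × NB D2) : ¬ sLE (some p) none := id

@[simp]
theorem sLE_some_some {p q : NB D1 × NB D2} : sLE (some p) (some q) ↔ p ≤ q := Iff.rfl

theorem sLE_refl (a : Option (NB D1 × NB D2)) : sLE a a := by
  cases a <;> simp

theorem sLE_trans {a b c : Option (NB D1 × NB D2)} (hab : sLE a b) (hbc : sLE b c) :
    sLE a c := by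
  rcases a with _ | p <;> rcases b with _ | q <;> rcases c with _ | r <;>
    simp_all only [sLE_none, not_sLE_some_none, sLE_some_some]
  exact hab.trans hbc

theorem sLE_antisymm {a b : Option (NB D1 × NB D2)} (hab : sLE a b) (hba : sLE b a) :
    a = b := by
  rcases a with _ | p <;> rcases b with _ | q <;>
    simp_all only [sLE_none, not_sLE_some_none, sLE_some_some, Option.some.injEq]
  exact le_antisymm hab hba

theorem sLE_sInf_iff {a b c : Option (NB D1 × NB D2)} :
    sLE c (sInf a b) ↔ sLE c a ∧ sLE c b := by
  rcases a with _ | p <;> rcases b with _ | q <;> rcases c with _ | r <;>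
    simp only [_root_.sInf, sLE_none, not_sLE_some_none, sLE_some_some, ne_eq, and_self,
      and_false, false_and]
  split_ifs with h
  · simp only [sLE_some_some, Prod.le_def, ← Subtype.coe_le_coe, le_inf_iff]
    tauto
  · simp only [not_sLE_some_none, false_iff, not_and]
    intro hrp hrq
    exact h ⟨ne_bot_of_le_ne_bot r.1.2 (le_inf hrp.1 hrq.1),
      ne_bot_of_le_ne_bot r.2.2 (le_inf hrp.2 hrq.2)⟩

theorem sSup_sLE_iff {a b c : Option (NB D1 × NB D2)} :
    sLE (sSup a b) c ↔ sLE a c ∧ sLE b c := by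
  rcases a with _ | p <;> rcases b with _ | q <;> rcases c with _ | r <;>
    simp only [_root_.sSup, sLE_none, not_sLE_some_none, sLE_some_some, and_self, and_true,
      true_and, and_false]
  simp only [Prod.le_def, ← Subtype.coe_le_coe, sup_le_iff]
  tauto

theorem sLE_top (ht1 : (⊤ : D1) ≠ ⊥) (ht2 : (⊤ : D2) ≠ ⊥) (a : Option (NB D1 × NB D2)) :
    sLE a (some (⟨⊤, ht1⟩, ⟨⊤, ht2⟩)) := by
  rcases a with _ | p
  exacts [trivial, ⟨le_top, le_top⟩]

end Order

section Attenuation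

variable (h1 : Stable D1) (h2 : Stable D2)

@[simp]
theorem sAtt_none_right (a : Option (NB D1 × NB D2)) : sAtt h1 h2 a none = none := by
  cases a <;> rfl

theorem sAtt_assoc (a b c : Option (NB D1 × NB D2)) :
    sAtt h1 h2 (sAtt h1 h2 a b) c = sAtt h1 h2 a (sAtt h1 h2 b c) := by
  rcases a with _ | p <;> rcases b with _ | q <;> rcases c with _ | r <;> simp [sAtt, att_assoc]

theorem sAtt_comm (a b : Option (NB D1 × NB D2)) : sAtt h1 h2 a b = sAtt h1 h2 b a := by
  rcases a with _ | p <;> rcases b with _ | q <;> simp [sAtt, att_comm]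

theorem sAtt_mono {a b c d : Option (NB D1 × NB D2)} (hab : sLE a b) (hcd : sLE c d) :
    sLE (sAtt h1 h2 a c) (sAtt h1 h2 b d) := by
  rcases a with _ | p <;> rcases b with _ | q <;> rcases c with _ | r <;> rcases d with _ | s <;>
    simp_all only [sAtt, sLE_none, not_sLE_some_none, sLE_some_some, Prod.le_def,
      ← Subtype.coe_le_coe]
  exact ⟨att_mono _ _ _ _ hab.1 hcd.1, att_mono _ _ _ _ hab.2 hcd.2⟩

theorem sAtt_top (ht1 : (⊤ : D1) ≠ ⊥) (ht2 : (⊤ : D2) ≠ ⊥) (a : Option (NB D1 × NB D2)) :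
    sAtt h1 h2 a (some (⟨⊤, ht1⟩, ⟨⊤, ht2⟩)) = a := by
  cases a <;> simp [sAtt, att_top]

theorem sAtt_sLE (a b : Option (NB D1 × NB D2)) : sLE (sAtt h1 h2 a b) b := by
  rcases a with _ | p <;> rcases b with _ | q <;>
    simp only [sAtt, sLE_none, sLE_some_some, Prod.le_def, ← Subtype.coe_le_coe]
  exact ⟨att_le _ _, att_le _ _⟩

theorem sAtt_sInf (a b c : Option (NB D1 × NB D2)) :
    sAtt h1 h2 a (sInf b c) = sInf (sAtt h1 h2 a b) (sAtt h1 h2 a c) := by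
  rcases a with _ | p <;> rcases b with _ | q <;> rcases c with _ | r <;> try rfl
  have hcond : (att p.1.1 q.1.1 ⊓ att p.1.1 r.1.1 ≠ ⊥ ∧ att p.2.1 q.2.1 ⊓ att p.2.1 r.2.1 ≠ ⊥) ↔
      (q.1.1 ⊓ r.1.1 ≠ ⊥ ∧ q.2.1 ⊓ r.2.1 ≠ ⊥) := by
    simp only [← att_inf, ne_eq, h1.att_eq_bot_iff p.1.2, h2.att_eq_bot_iff p.2.2]
  by_cases h : q.1.1 ⊓ r.1.1 ≠ ⊥ ∧ q.2.1 ⊓ r.2.1 ≠ ⊥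
  · simp only [_root_.sInf, sAtt, dif_pos h, dif_pos (hcond.2 h), att_inf]
  · simp only [_root_.sInf, sAtt, dif_neg h, dif_neg (mt hcond.1 h)]

theorem sAtt_ne_none {a b : Option (NB D1 × NB D2)} (ha : a ≠ none) (hb : b ≠ none) :
    sAtt h1 h2 a b ≠ none := by
  rcases a with _ | p <;> rcases b with _ | q <;> simp_all [sAtt]

end Attenuation

/-- The strict cartesian product of two stable qualification domains is again a
stable qualification domain: `sLE` is a partial order with `sInf` as binary
infimum, `sSup` as binary supremum, `none` as bottom, (⊤,⊤) as top, and the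
componentwise attenuation `sAtt` satisfies all qualification-domain axioms and
stability. -/
theorem strict_prod_stable_qualification_domain
    (h1 : Stable D1) (h2 : Stable D2)
    (ht1 : (⊤ : D1) ≠ ⊥) (ht2 : (⊤ : D2) ≠ ⊥) :
    -- partial order
    (∀ a : Option (NB D1 × NB D2), sLE a a) ∧
    (∀ a b c : Option (NB D1 × NB D2), sLE a b → sLE b c → sLE a c) ∧
    (∀ a b : Option (NB D1 × NB D2), sLE a b → sLE b a → a = b) ∧
    -- lattice: sInf is the greatest lower bound, sSup the least upper bound
    (∀ a b : Option (NB D1 × NB D2), sLE (sInf a b) a ∧ sLE (sInf a b) b ∧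
      ∀ c, sLE c a → sLE c b → sLE c (sInf a b)) ∧
    (∀ a b : Option (NB D1 × NB D2), sLE a (sSup a b) ∧ sLE b (sSup a b) ∧
      ∀ c, sLE a c → sLE b c → sLE (sSup a b) c) ∧
    -- bottom and top
    (∀ a : Option (NB D1 × NB D2), sLE none a) ∧
    (∀ a : Option (NB D1 × NB D2), sLE a (some (⟨⊤, ht1⟩, ⟨⊤, ht2⟩))) ∧
    -- attenuation axioms
    (∀ a b c, sAtt h1 h2 (sAtt h1 h2 a b) c = sAtt h1 h2 a (sAtt h1 h2 b c)) ∧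
    (∀ a b, sAtt h1 h2 a b = sAtt h1 h2 b a) ∧
    (∀ a b c d, sLE a b → sLE c d → sLE (sAtt h1 h2 a c) (sAtt h1 h2 b d)) ∧
    (∀ a, sAtt h1 h2 a (some (⟨⊤, ht1⟩, ⟨⊤, ht2⟩)) = a) ∧
    (∀ a, sAtt h1 h2 a none = none) ∧
    (∀ a b, sLE (sAtt h1 h2 a b) b) ∧
    (∀ a b c, sAtt h1 h2 a (sInf b c) = sInf (sAtt h1 h2 a b) (sAtt h1 h2 a c)) ∧
    -- stability
    (∀ a b, a ≠ none → b ≠ none → sAtt h1 h2 a b ≠ none) := by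
  refine ⟨sLE_refl, fun _ _ _ => sLE_trans, fun _ _ => sLE_antisymm, fun a b => ?_, fun a b => ?_,
    sLE_none, sLE_top ht1 ht2, sAtt_assoc h1 h2, sAtt_comm h1 h2,
    fun _ _ _ _ => sAtt_mono h1 h2, sAtt_top h1 h2 ht1 ht2, sAtt_none_right h1 h2, sAtt_sLE h1 h2,
    sAtt_sInf h1 h2, fun _ _ => sAtt_ne_none h1 h2⟩
  · obtain ⟨hinf_a, hinf_b⟩ := sLE_sInf_iff.1 (sLE_refl (sInf a b))
    exact ⟨hinf_a, hinf_b, fun _ hca hcb => sLE_sInf_iff.2 ⟨hca, hcb⟩⟩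
  · obtain ⟨ha_sup, hb_sup⟩ := sSup_sLE_iff.1 (sLE_refl (sSup a b))
    exact ⟨ha_sup, hb_sup, fun _ hac hbc => sSup_sLE_iff.2 ⟨hac, hbc⟩⟩

end StrictProd
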